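/- For all polynomial functors p₁, p₂, q there is an isomorphism of polynomial functors [p₁ ⊗ p₂, q] ≅ [p₁, [p₂, q]], where [p, q] denotes the Dirichlet closure. -/
import Mathlib


universe u

/-- A polynomial functor: a set of positions and, for each position, a set of directions. -/
structure PolyFunctor : Type (u+1) where
  Pos : Type u
  Dir : Pos → Type u

/-- A morphism of polynomial functors: forwards on positions, backwards on directions. -/
structure PolyHom (p q : PolyFunctor.{u}) : Type u where
  onPos : p.Pos → q.Pos
  onDir : ∀ I : p.Pos, q.Dir (onPos I) → p.Dir I

/-- An isomorphism of polynomial functors: a bijection on positions and,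
for each position, a bijection on directions. -/
structure PolyIso (p q : PolyFunctor.{u}) : Type u where
  pos : p.Pos ≃ q.Pos
  dir : ∀ I : p.Pos, p.Dir I ≃ q.Dir (pos I)

namespace PolyFunctor

/-- Coproduct `p + q`. -/
def add (p q : PolyFunctor.{u}) : PolyFunctor.{u} :=
  ⟨p.Pos ⊕ q.Pos, Sum.elim p.Dir q.Dir⟩

/-- Categorical product `p × q`. -/
def prod (p q : PolyFunctor.{u}) : PolyFunctor.{u} :=
  ⟨p.Pos × q.Pos, fun x => p.Dir x.1 ⊕ q.Dir x.2⟩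

/-- Dirichlet product `p ⊗ q`. -/
def tensor (p q : PolyFunctor.{u}) : PolyFunctor.{u} :=
  ⟨p.Pos × q.Pos, fun x => p.Dir x.1 × q.Dir x.2⟩

/-- Substitution (composition) product `p ◁ q`. -/
def subst (p q : PolyFunctor.{u}) : PolyFunctor.{u} :=
  ⟨Σ I : p.Pos, (p.Dir I → q.Pos), fun x => Σ i : p.Dir x.1, q.Dir (x.2 i)⟩

/-- The linear polynomial `A·y`. -/
def linear (A : Type u) : PolyFunctor.{u} :=
  ⟨A, fun _ => PUnit⟩

/-- The representable polynomial `y^A`. -/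
def rep (A : Type u) : PolyFunctor.{u} :=
  ⟨PUnit, fun _ => A⟩

/-- The constant polynomial `A`. -/
def const (A : Type u) : PolyFunctor.{u} :=
  ⟨A, fun _ => PEmpty⟩

/-- The identity polynomial `y`. -/
def y : PolyFunctor.{u} := linear PUnit

/-- Indexed product of a family of polynomials. -/
def pi (S : Type u) (r : S → PolyFunctor.{u}) : PolyFunctor.{u} :=
  ⟨∀ s : S, (r s).Pos, fun I => Σ s : S, (r s).Dir (I s)⟩

/-- Application of a polynomial functor to a set: `p(X) = Σ_{I ∈ p(1)} (p[I] → X)`. -/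
def obj (p : PolyFunctor.{u}) (X : Type u) : Type u :=
  Σ I : p.Pos, (p.Dir I → X)

end PolyFunctor

/-- The Dirichlet closure, in standard form: positions are morphisms `φ : p → q`,
directions at `φ` are `Σ_{I ∈ p(1)} q[φ₁ I]`. -/
def dirClosure (p q : PolyFunctor.{u}) : PolyFunctor.{u} :=
  ⟨PolyHom p q, fun φ => Σ I : p.Pos, q.Dir (φ.onPos I)⟩

/-- `[p₁ ⊗ p₂, q] ≅ [p₁, [p₂, q]]`. -/
theorem dirClosure_tensor (p₁ p₂ q : PolyFunctor.{u}) :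
    Nonempty (PolyIso (dirClosure (p₁.tensor p₂) q)
      (dirClosure p₁ (dirClosure p₂ q))) := by
  refine ⟨⟨⟨fun φ => ?_, fun ψ => ?_, ?_, ?_⟩, fun φ => ?_⟩⟩
  · exact
      { onPos := fun I =>
          { onPos := fun J => φ.onPos (I, J)
            onDir := fun J d => (φ.onDir (I, J) d).2 }
        onDir := fun I x => (φ.onDir (I, x.1) x.2).1 }
  · exact
      { onPos := fun x => (ψ.onPos x.1).onPos x.2
        onDir := fun x d => (ψ.onDir x.1 ⟨x.2, d⟩, (ψ.onPos x.1).onDir x.2 d) }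
  · intro φ; rfl
  · intro ψ; rfl
  · exact
      { toFun := fun x => ⟨x.1.1, x.1.2, x.2⟩
        invFun := fun x => ⟨(x.1, x.2.1), x.2.2⟩
        left_inv := fun x => rfl
        right_inv := fun x => rfl }
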